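/- Let ω = (j₃ j₂ j₁) be a 3-cycle in S_n and σ ∈ S_n. If j₁, j₂, j₃ lie in three pairwise distinct cycles of σ, then ℓ(ωσ) = ℓ(σ) − 2, and moreover j₁, j₂, j₃ all lie in one common cycle of ωσ. -/

import Mathlib

/-!
Since `ω = (j₃ j₂)(j₂ j₁)`, the permutation `ωσ` arises from `σ` by two left multiplications by
transpositions. Left-multiplying by `(x y)` with `x`, `y` in different cycles merges those two
cycles and leaves every other cycle alone, so the number of orbits drops by exactly one. After the
first merge `j₁` and `j₂` share a cycle while `j₃` still lies in another one, so the second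
transposition merges again.
-/

open Equiv

/-- Number of disjoint cycles of a permutation of `Fin n`, counting each fixed
point as a cycle of length 1. -/
def cycleCount {n : ℕ} (σ : Perm (Fin n)) : ℕ :=
  σ.cycleType.card + (n - σ.support.card)

open scoped Finset

namespace Equiv.Perm

variable {α : Type*} {σ : Perm α} {s : Set α} {a b x y : α}

theorem SameCycle.mem_of_mapsTo [Finite α] (hs : Set.MapsTo σ s s) (ha : a ∈ s)
    (h : σ.SameCycle a b) : b ∈ s := by
  obtain ⟨i, rfl⟩ := h.exists_nat_pow_eq
  exact hs.perm_pow i ha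

theorem pow_apply_eq_pow_apply_of_forall_lt {τ : Perm α} {k : ℕ}
    (h : ∀ j < k, τ ((σ ^ j) x) = σ ((σ ^ j) x)) : (τ ^ k) x = (σ ^ k) x := by
  induction k with
  | zero => rfl
  | succ k ih =>
    rw [pow_succ', mul_apply, ih fun j hj => h j (by omega), h k k.lt_succ_self, pow_succ',
      mul_apply]

variable [DecidableEq α]

theorem SameCycle.of_swap_mul [Finite α] (hax : ¬σ.SameCycle a x) (hay : ¬σ.SameCycle a y)
    (h : (swap x y * σ).SameCycle a b) : σ.SameCycle a b := by
  refine h.mem_of_mapsTo (s := {z | σ.SameCycle a z}) (fun z hz => ?_) SameCycle.rfl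
  have hσz : σ.SameCycle a (σ z) := sameCycle_apply_right.2 hz
  have hx : σ z ≠ x := fun h => hax (h ▸ hσz)
  have hy : σ z ≠ y := fun h => hay (h ▸ hσz)
  simpa [swap_apply_of_ne_of_ne hx hy] using hσz

theorem sameCycle_swap_mul_of_not_sameCycle [Finite α] (hxy : ¬σ.SameCycle x y) :
    (swap x y * σ).SameCycle x y := by
  -- Up to the first time it reaches `σ⁻¹ x`, the `σ`-orbit of `x` avoids `x` and `y`, so
  -- `swap x y * σ` follows it there, and then sends `σ⁻¹ x` to `y`.
  have hex : ∃ k, (σ ^ k) x = σ⁻¹ x :=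
    (sameCycle_symm_apply_right.2 SameCycle.rfl).exists_nat_pow_eq
  set k := Nat.find hex
  have hagree : ∀ j < k, (swap x y * σ) ((σ ^ j) x) = σ ((σ ^ j) x) := by
    intro j hj
    have hx : σ ((σ ^ j) x) ≠ x := fun h => Nat.find_min hex hj (eq_inv_iff_eq.2 h)
    have hy : σ ((σ ^ j) x) ≠ y := fun h =>
      hxy (h ▸ sameCycle_apply_right.2 (sameCycle_pow_right.2 SameCycle.rfl))
    rw [mul_apply, swap_apply_of_ne_of_ne hx hy]
  refine ⟨((k + 1 : ℕ) : ℤ), ?_⟩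
  rw [zpow_natCast, pow_succ', mul_apply, pow_apply_eq_pow_apply_of_forall_lt hagree,
    Nat.find_spec hex]
  simp

theorem SameCycle.swap_mul_of_not_sameCycle [Finite α] (hxy : ¬σ.SameCycle x y)
    (h : σ.SameCycle a b) : (swap x y * σ).SameCycle a b := by
  set τ := swap x y * σ
  have hτxy : τ.SameCycle x y := sameCycle_swap_mul_of_not_sameCycle hxy
  have hσ : σ = swap x y * τ := (swap_mul_self_mul x y σ).symm
  rw [hσ] at h
  -- Since `x` and `y` share a `τ`-cycle, each step of `σ = swap x y * τ` stays in a `τ`-cycle.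
  refine h.mem_of_mapsTo (s := {z | τ.SameCycle a z}) (fun z hz => ?_) SameCycle.rfl
  have hτz : τ.SameCycle a (τ z) := sameCycle_apply_right.2 hz
  change τ.SameCycle a (swap x y (τ z))
  rw [swap_apply_def]
  split_ifs with hx hy
  · exact (hx ▸ hτz).trans hτxy
  · exact (hy ▸ hτz).trans hτxy.symm
  · exact hτz

theorem natCard_quotient_sameCycle_swap_mul [Finite α] (hxy : ¬σ.SameCycle x y) :
    Nat.card (Quotient (SameCycle.setoid σ)) =
      Nat.card (Quotient (SameCycle.setoid (swap x y * σ))) + 1 := by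
  classical
  set τ := swap x y * σ
  let q : Quotient (SameCycle.setoid σ) → Quotient (SameCycle.setoid τ) :=
    Quotient.map' id fun _ _ h => h.swap_mul_of_not_sameCycle hxy
  have hq : Function.Bijective fun c : {c // c ≠ ⟦y⟧} => q c.1 := by
    constructor
    · rintro ⟨c, hc⟩ ⟨d, hd⟩ h
      induction c using Quotient.inductionOn with | _ a => ?_
      induction d using Quotient.inductionOn with | _ b => ?_
      have hay : ¬σ.SameCycle a y := fun h => hc (Quotient.sound h)
      have hby : ¬σ.SameCycle b y := fun h => hd (Quotient.sound h)
      have hab : τ.SameCycle a b := Quotient.exact h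
      refine Subtype.ext (Quotient.sound ?_)
      by_cases hax : σ.SameCycle a x
      · by_cases hbx : σ.SameCycle b x
        · exact hax.trans hbx.symm
        · exact (hab.symm.of_swap_mul hbx hby).symm
      · exact hab.of_swap_mul hax hay
    · refine Quotient.ind fun b => ?_
      by_cases hby : σ.SameCycle b y
      · refine ⟨⟨⟦x⟧, fun h => hxy (Quotient.exact h)⟩, Quotient.sound ?_⟩
        exact (sameCycle_swap_mul_of_not_sameCycle hxy).trans
          (hby.symm.swap_mul_of_not_sameCycle hxy)
      · exact ⟨⟨⟦b⟧, fun h => hby (Quotient.exact h)⟩, rfl⟩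
  rw [← Nat.card_congr (Equiv.ofBijective _ hq), ← Finite.card_option,
    Nat.card_congr (Equiv.optionSubtypeNe _)]

theorem natCard_quotient_sameCycle [Fintype α] (σ : Perm α) :
    Nat.card (Quotient (SameCycle.setoid σ)) =
      #σ.cycleFactorsFinset + Fintype.card (Function.fixedPoints σ) := by
  let g : α → σ.cycleFactorsFinset ⊕ Function.fixedPoints σ := fun a =>
    if h : σ a = a then .inr ⟨a, h⟩
    else .inl ⟨σ.cycleOf a, cycleOf_mem_cycleFactorsFinset_iff.2 (mem_support.2 h)⟩
  have hg : ∀ a b, g a = g b ↔ σ.SameCycle a b := by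
    intro a b
    dsimp only [g]
    by_cases ha : σ a = a <;> by_cases hb : σ b = b
    · rw [dif_pos ha, dif_pos hb, Sum.inr.injEq]
      exact ⟨fun h => (Subtype.mk.inj h).sameCycle σ, fun h => Subtype.ext (h.eq_of_left ha)⟩
    · rw [dif_pos ha, dif_neg hb]
      exact iff_of_false Sum.inr_ne_inl fun h => hb (h.apply_eq_self_iff.1 ha)
    · rw [dif_neg ha, dif_pos hb]
      exact iff_of_false Sum.inl_ne_inr fun h => ha (h.apply_eq_self_iff.2 hb)
    · rw [dif_neg ha, dif_neg hb, Sum.inl.injEq, Subtype.mk.injEq,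
        sameCycle_iff_cycleOf_eq_of_mem_support (mem_support.2 ha) (mem_support.2 hb)]
  have hg_surj : Function.Surjective g := by
    rintro (⟨c, hc⟩ | ⟨a, ha⟩)
    · obtain ⟨a, ha⟩ := (mem_cycleFactorsFinset_iff.1 hc).1.nonempty_support
      have hσa : σ a ≠ a := mem_support.1 (mem_cycleFactorsFinset_support_le hc ha)
      exact ⟨a, by simp [g, hσa, ← cycle_is_cycleOf ha hc]⟩
    · exact ⟨a, by simp [g, ha.eq]⟩
  let e : Quotient (SameCycle.setoid σ) ≃ σ.cycleFactorsFinset ⊕ Function.fixedPoints σ :=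
    .ofBijective (Quotient.lift g fun a b h => (hg a b).2 h)
      ⟨Quotient.ind₂ fun a b h => Quotient.sound ((hg a b).1 h),
        hg_surj.of_comp (g := Quotient.mk _)⟩
  rw [Nat.card_congr e, Nat.card_sum, Nat.card_eq_fintype_card, Nat.card_eq_fintype_card,
    Fintype.card_coe]

end Equiv.Perm

open Equiv.Perm

theorem cycleCount_eq_natCard_quotient {n : ℕ} (σ : Perm (Fin n)) :
    cycleCount σ = Nat.card (Quotient (SameCycle.setoid σ)) := by
  rw [natCard_quotient_sameCycle, card_fixedPoints, sum_cycleType, Fintype.card_fin, cycleCount,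
    cycleType_def, Multiset.card_map, Finset.card_val]

theorem threeCycle_mul_case_three_distinct_cycles_general
    (n : ℕ) (σ ω : Perm (Fin n)) (j₁ j₂ j₃ : Fin n)
    (hω : ω = Equiv.swap j₃ j₂ * Equiv.swap j₂ j₁)
    (hc12 : ¬ σ.SameCycle j₁ j₂) (hc13 : ¬ σ.SameCycle j₁ j₃)
    (hc23 : ¬ σ.SameCycle j₂ j₃) :
    cycleCount (ω * σ) = cycleCount σ - 2 ∧
    (ω * σ).SameCycle j₁ j₂ ∧ (ω * σ).SameCycle j₁ j₃ ∧ (ω * σ).SameCycle j₂ j₃ := by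
  have hc21 : ¬σ.SameCycle j₂ j₁ := fun h => hc12 h.symm
  set τ := swap j₂ j₁ * σ
  have hc32 : ¬τ.SameCycle j₃ j₂ := fun h =>
    hc23 (h.of_swap_mul (fun h' => hc23 h'.symm) (fun h' => hc13 h'.symm)).symm
  have hωσ : ω * σ = swap j₃ j₂ * τ := by rw [hω, mul_assoc]
  have h21 : (ω * σ).SameCycle j₂ j₁ :=
    hωσ ▸ (sameCycle_swap_mul_of_not_sameCycle hc21).swap_mul_of_not_sameCycle hc32
  have h32 : (ω * σ).SameCycle j₃ j₂ := hωσ ▸ sameCycle_swap_mul_of_not_sameCycle hc32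
  refine ⟨?_, h21.symm, h21.symm.trans h32.symm, h32.symm⟩
  rw [cycleCount_eq_natCard_quotient, cycleCount_eq_natCard_quotient, hωσ,
    natCard_quotient_sameCycle_swap_mul hc21, natCard_quotient_sameCycle_swap_mul hc32]
  omega

/-- If the three points of the 3-cycle `ω = (j₃ j₂ j₁)` (sending `j₃ ↦ j₂ ↦ j₁ ↦ j₃`)
lie in three pairwise distinct cycles of `σ`, then `ℓ(ωσ) = ℓ(σ) - 2` and
`j₁, j₂, j₃` all lie in a common cycle of `ωσ`. -/
theorem threeCycle_mul_case_three_distinct_cycles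
    (n : ℕ) (σ ω : Perm (Fin n)) (j₁ j₂ j₃ : Fin n)
    (h12 : j₁ ≠ j₂) (h13 : j₁ ≠ j₃) (h23 : j₂ ≠ j₃)
    (hω : ω = Equiv.swap j₃ j₂ * Equiv.swap j₂ j₁)
    (hc12 : ¬ σ.SameCycle j₁ j₂) (hc13 : ¬ σ.SameCycle j₁ j₃)
    (hc23 : ¬ σ.SameCycle j₂ j₃) :
    cycleCount (ω * σ) = cycleCount σ - 2 ∧
    (ω * σ).SameCycle j₁ j₂ ∧ (ω * σ).SameCycle j₁ j₃ ∧ (ω * σ).SameCycle j₂ j₃ :=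
  threeCycle_mul_case_three_distinct_cycles_general n σ ω j₁ j₂ j₃ hω hc12 hc13 hc23
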